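/- (Lemma E.2.) Let A and B be symmetric positive definite d×d real matrices with λ_min(A) > ‖B−A‖_op, where λ_min(A) is the smallest eigenvalue of A and ‖·‖_op is the operator norm induced by the Euclidean norm. Then |log det(A) − log det(B)| ≤ d·‖B−A‖_op / (λ_min(A) − ‖B−A‖_op). -/

import Mathlib

/-! Take a symmetric `S` with `S A S = 1` (e.g. `S = A^{-1/2}`). Then
`log det B - log det A = log det (S B S)` is the sum of the logarithms of the eigenvalues `ν` of
`S B S`. For a unit vector `u` and `w = S u` one has `uᵀ (S B S) u - 1 = wᵀ (B - A) w` and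
`λ_min(A) ‖w‖² ≤ wᵀ A w = 1`, so every `|ν - 1| ≤ x := ‖B - A‖ / λ_min(A) < 1`, and then
`|log ν| ≤ x / (1 - x)` by `1 - ν⁻¹ ≤ log ν ≤ ν - 1`. -/

open Matrix Real

/-- The Euclidean (ℓ₂) norm of a vector in `Fin d → ℝ`. -/
noncomputable def l2norm {d : ℕ} (v : Fin d → ℝ) : ℝ :=
  Real.sqrt (v ⬝ᵥ v)

/-- The operator norm of a matrix with respect to the Euclidean norm, as the supremum of
`‖M v‖₂` over the closed Euclidean unit ball. -/
noncomputable def opNorm {d : ℕ} (M : Matrix (Fin d) (Fin d) ℝ) : ℝ :=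
  ⨆ v : {v : Fin d → ℝ // v ⬝ᵥ v ≤ 1}, l2norm (M *ᵥ (v : Fin d → ℝ))

/-- The smallest eigenvalue of a symmetric matrix, given by the Rayleigh quotient
characterization: the infimum of `vᵀ M v` over unit vectors `v`. -/
noncomputable def minEig {d : ℕ} (M : Matrix (Fin d) (Fin d) ℝ) : ℝ :=
  ⨅ v : {v : Fin d → ℝ // v ⬝ᵥ v = 1}, (v : Fin d → ℝ) ⬝ᵥ (M *ᵥ (v : Fin d → ℝ))

open scoped RealInnerProductSpace

section EuclideanNorms
variable {d : ℕ}

lemma dotProduct_eq_inner_toLp (v w : Fin d → ℝ) :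
    v ⬝ᵥ w = ⟪WithLp.toLp 2 v, WithLp.toLp 2 w⟫ := by
  simp [EuclideanSpace.inner_eq_star_dotProduct, dotProduct_comm]

lemma dotProduct_self_eq_norm_sq (v : Fin d → ℝ) : v ⬝ᵥ v = ‖WithLp.toLp 2 v‖ ^ 2 := by
  rw [dotProduct_eq_inner_toLp, real_inner_self_eq_norm_sq]

lemma l2norm_eq_norm (v : Fin d → ℝ) : l2norm v = ‖WithLp.toLp 2 v‖ := by
  rw [l2norm, dotProduct_self_eq_norm_sq, Real.sqrt_sq (norm_nonneg _)]

lemma opNorm_eq_norm_toEuclideanCLM (M : Matrix (Fin d) (Fin d) ℝ) :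
    opNorm M = ‖toEuclideanCLM (n := Fin d) (𝕜 := ℝ) M‖ := by
  rw [← ContinuousLinearMap.sSup_unitClosedBall_eq_norm, opNorm, iSup]
  congr 1
  ext r
  simp only [Set.mem_range, Subtype.exists, Set.mem_image, Metric.mem_closedBall, dist_zero_right,
    dotProduct_self_eq_norm_sq, sq_le_one_iff₀ (norm_nonneg _), l2norm_eq_norm]
  constructor
  · rintro ⟨v, hv, rfl⟩
    exact ⟨WithLp.toLp 2 v, hv, rfl⟩
  · rintro ⟨x, hx, rfl⟩
    exact ⟨x.ofLp, hx, rfl⟩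

lemma opNorm_nonneg (M : Matrix (Fin d) (Fin d) ℝ) : 0 ≤ opNorm M :=
  opNorm_eq_norm_toEuclideanCLM M ▸ norm_nonneg _

lemma abs_dotProduct_mulVec_le (M : Matrix (Fin d) (Fin d) ℝ) (v : Fin d → ℝ) :
    |v ⬝ᵥ M *ᵥ v| ≤ opNorm M * (v ⬝ᵥ v) := by
  rw [dotProduct_eq_inner_toLp, ← toEuclideanCLM_toLp, opNorm_eq_norm_toEuclideanCLM,
    dotProduct_self_eq_norm_sq]
  exact (abs_real_inner_le_norm _ _).trans (by
    nlinarith [(toEuclideanCLM (n := Fin d) (𝕜 := ℝ) M).le_opNorm (WithLp.toLp 2 v),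
      norm_nonneg (WithLp.toLp 2 v)])

lemma minEig_mul_dotProduct_self_le (M : Matrix (Fin d) (Fin d) ℝ) (v : Fin d → ℝ) :
    minEig M * (v ⬝ᵥ v) ≤ v ⬝ᵥ M *ᵥ v := by
  have hbdd : BddBelow (Set.range fun u : {u : Fin d → ℝ // u ⬝ᵥ u = 1} =>
      (u : Fin d → ℝ) ⬝ᵥ M *ᵥ (u : Fin d → ℝ)) := by
    refine ⟨-opNorm M, ?_⟩
    rintro _ ⟨⟨u, hu⟩, rfl⟩
    simpa [hu] using neg_le_of_abs_le (abs_dotProduct_mulVec_le M u)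
  rcases eq_or_ne v 0 with rfl | hv
  · simp
  set t := ‖WithLp.toLp 2 v‖
  have ht : 0 < t := by simpa [t] using hv
  have hunit : (t⁻¹ • v) ⬝ᵥ (t⁻¹ • v) = 1 := by
    rw [dotProduct_self_eq_norm_sq, WithLp.toLp_smul, norm_smul, norm_inv, Real.norm_of_nonneg ht.le,
      inv_mul_cancel₀ ht.ne', one_pow]
  have := ciInf_le hbdd ⟨t⁻¹ • v, hunit⟩
  simp only [mulVec_smul, dotProduct_smul, smul_dotProduct, smul_eq_mul] at this
  rw [dotProduct_self_eq_norm_sq]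
  calc minEig M * t ^ 2 ≤ t⁻¹ * (t⁻¹ * (v ⬝ᵥ M *ᵥ v)) * t ^ 2 := by gcongr; exact this
    _ = v ⬝ᵥ M *ᵥ v := by field_simp

lemma abs_dotProduct_congr_mulVec_sub_le {A B S : Matrix (Fin d) (Fin d) ℝ}
    (hS : S.IsSymm) (hSAS : S * A * S = 1) (hA : 0 < minEig A) (u : Fin d → ℝ) :
    |u ⬝ᵥ (S * B * S) *ᵥ u - u ⬝ᵥ u| ≤ opNorm (B - A) / minEig A * (u ⬝ᵥ u) := by
  set w := S *ᵥ u
  have hS_dot (v : Fin d → ℝ) : u ⬝ᵥ S *ᵥ v = w ⬝ᵥ v := by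
    rw [dotProduct_mulVec, ← mulVec_transpose, hS.eq]
  have hAw : w ⬝ᵥ A *ᵥ w = u ⬝ᵥ u := by
    rw [← hS_dot, mulVec_mulVec, mulVec_mulVec, hSAS, one_mulVec]
  have hdiff : u ⬝ᵥ (S * B * S) *ᵥ u - u ⬝ᵥ u = w ⬝ᵥ (B - A) *ᵥ w := by
    rw [← hAw, sub_mulVec, dotProduct_sub, ← mulVec_mulVec, ← mulVec_mulVec, hS_dot]
  have hw : minEig A * (w ⬝ᵥ w) ≤ u ⬝ᵥ u := hAw ▸ minEig_mul_dotProduct_self_le A w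
  rw [hdiff, div_mul_eq_mul_div, le_div_iff₀ hA]
  calc |w ⬝ᵥ (B - A) *ᵥ w| * minEig A ≤ opNorm (B - A) * (w ⬝ᵥ w) * minEig A := by
        gcongr; exact abs_dotProduct_mulVec_le _ _
    _ ≤ opNorm (B - A) * (u ⬝ᵥ u) := by
        rw [mul_assoc, mul_comm (w ⬝ᵥ w)]
        exact mul_le_mul_of_nonneg_left hw (opNorm_nonneg _)

lemma Matrix.IsHermitian.abs_eigenvalues_sub_one_le {M : Matrix (Fin d) (Fin d) ℝ}
    (hM : M.IsHermitian) {x : ℝ} (h : ∀ u, |u ⬝ᵥ M *ᵥ u - u ⬝ᵥ u| ≤ x * (u ⬝ᵥ u)) (i : Fin d) :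
    |hM.eigenvalues i - 1| ≤ x := by
  set u := (hM.eigenvectorBasis i).ofLp
  have hu : u ⬝ᵥ u = 1 := by
    rw [dotProduct_self_eq_norm_sq, WithLp.toLp_ofLp, hM.eigenvectorBasis.orthonormal.1 i, one_pow]
  have hν : hM.eigenvalues i = u ⬝ᵥ M *ᵥ u := by simpa using hM.eigenvalues_eq i
  simpa [hν, hu] using h u

end EuclideanNorms

lemma abs_log_le_of_abs_sub_one_le {x y : ℝ} (hx : x < 1) (h : |y - 1| ≤ x) :
    |log y| ≤ x / (1 - x) := by
  obtain ⟨hlo, hhi⟩ := abs_le.1 h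
  have hx0 : 0 ≤ x := (abs_nonneg _).trans h
  have h1x : 0 < 1 - x := by linarith
  have hy : 0 < y := by linarith
  rw [abs_le]
  constructor
  · have hinv : y⁻¹ ≤ (1 - x)⁻¹ := inv_anti₀ h1x (by linarith)
    have : -(x / (1 - x)) = 1 - (1 - x)⁻¹ := by field_simp; ring
    linarith [one_sub_inv_le_log_of_pos hy]
  · have : x ≤ x / (1 - x) := le_div_self hx0 h1x (by linarith)
    linarith [log_le_sub_one_of_pos hy]

lemma Matrix.IsHermitian.abs_log_det_le {n : Type*} [Fintype n] [DecidableEq n]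
    {M : Matrix n n ℝ} (hM : M.IsHermitian) {x : ℝ} (hx : x < 1)
    (h : ∀ i, |hM.eigenvalues i - 1| ≤ x) :
    |log M.det| ≤ Fintype.card n * (x / (1 - x)) := by
  have hpos (i : n) : 0 < hM.eigenvalues i := by linarith [(abs_le.1 (h i)).1]
  rw [hM.det_eq_prod_eigenvalues]
  simp only [RCLike.ofReal_real_eq_id, id]
  rw [log_prod fun i _ => (hpos i).ne']
  calc |∑ i, log (hM.eigenvalues i)| ≤ ∑ i, |log (hM.eigenvalues i)| :=
        Finset.abs_sum_le_sum_abs _ _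
    _ ≤ ∑ _i : n, x / (1 - x) :=
        Finset.sum_le_sum fun i _ => abs_log_le_of_abs_sub_one_le hx (h i)
    _ = Fintype.card n * (x / (1 - x)) := by simp

open scoped MatrixOrder in
lemma Matrix.PosDef.exists_isSymm_mul_mul_eq_one {n : Type*} [Fintype n] [DecidableEq n]
    {A : Matrix n n ℝ} (hA : A.PosDef) : ∃ S : Matrix n n ℝ, S.IsSymm ∧ S * A * S = 1 := by
  set S := CFC.sqrt A⁻¹
  have hSS : S * S = A⁻¹ := CFC.sqrt_mul_sqrt_self _ hA.inv.posSemidef.nonneg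
  have hS : S.IsHermitian := (nonneg_iff_posSemidef.1 (CFC.sqrt_nonneg _)).isHermitian
  refine ⟨S, by simpa [IsSymm, conjTranspose_eq_transpose_of_trivial] using hS.eq, ?_⟩
  -- `S * (S * A) = A⁻¹ * A = 1`, and one-sided inverses of square matrices are two-sided.
  refine mul_eq_one_comm.1 ?_
  rw [← Matrix.mul_assoc, hSS, nonsing_inv_mul _ hA.det_pos.ne'.isUnit]

lemma det_mul_mul_eq_div_of_mul_mul_eq_one {n R : Type*} [Fintype n] [DecidableEq n] [Field R]
    {A S : Matrix n n R} (h : S * A * S = 1) (B : Matrix n n R) :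
    (S * B * S).det = B.det / A.det := by
  have hdet : S.det * A.det * S.det = 1 := by simpa using congrArg det h
  have hA : A.det ≠ 0 := by rintro h0; simp [h0] at hdet
  rw [eq_div_iff hA, det_mul, det_mul]
  linear_combination B.det * hdet

theorem stmt9 {d : ℕ} (A B : Matrix (Fin d) (Fin d) ℝ)
    (hA : A.PosDef) (hB : B.PosDef) (h : opNorm (B - A) < minEig A) :
    |Real.log A.det - Real.log B.det| ≤
      d * opNorm (B - A) / (minEig A - opNorm (B - A)) := by
  obtain ⟨S, hS, hSAS⟩ := hA.exists_isSymm_mul_mul_eq_one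
  have hA_min : 0 < minEig A := (opNorm_nonneg _).trans_lt h
  have hM : (S * B * S).IsHermitian := by
    simpa [conjTranspose_eq_transpose_of_trivial, hS.eq] using
      isHermitian_conjTranspose_mul_mul S hB.isHermitian
  have hlog := hM.abs_log_det_le ((div_lt_one hA_min).2 h)
    (hM.abs_eigenvalues_sub_one_le (abs_dotProduct_congr_mulVec_sub_le hS hSAS hA_min))
  rw [det_mul_mul_eq_div_of_mul_mul_eq_one hSAS, log_div hB.det_pos.ne' hA.det_pos.ne',
    abs_sub_comm, Fintype.card_fin] at hlog
  exact hlog.trans_eq (by field_simp [(sub_pos.2 h).ne'])
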